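/- Fix n ≥ 1 and integers 0 ≤ i_0 < ⋯ < i_{n−1} and 0 ≤ j_0 < ⋯ < j_{n−1}, and a ℤ-indexed family μ in a commutative ring. Define the Plücker coordinate p(i;j) = det(μ_{i_k − j_l})_{0≤k,l<n} and, for k ∈ ℤ, the action V_k on such determinants induced by the derivation μ_j ↦ (j+k)μ_{j+k}. Then V_k p(i;j) = Σ_{l=0}^{n−1} (i_l + k)·p(i_0,…,i_l+k,…,i_{n−1}; j) − Σ_{l=0}^{n−1} j_l·p(i; j_0,…,j_l−k,…,j_{n−1}). -/

import Mathlib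

open MvPolynomial Matrix

/-!
A derivation acts on a determinant by differentiating one column at a time. Since
`(i a - j b) + k = (i a + k) - j b = i a - (j b - k)`, the derivative of the column `b` of
`(μ (i a - j b))` splits into the column `((i a + k) μ (i a + k - j b))_a` and `-j b` times the
column shifted to `j b - k`. The latter gives the second sum directly. For the former, replacing
the columns of a matrix `P` one at a time by those of a matrix `C` and summing gives the same as
replacing its rows one at a time (both are `trace (adjugate P * C)`), and replacing row `a` gives
`(i a + k)` times the Plücker coordinate with `i a` shifted to `i a + k`.
-/

namespace Derivation

variable {R A M : Type*} [CommSemiring R] [CommSemiring A] [AddCommMonoid M] [Algebra R A]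
  [Module A M] [Module R M]

theorem leibniz_prod {ι : Type*} [DecidableEq ι] (D : Derivation R A M) (s : Finset ι)
    (f : ι → A) : D (∏ x ∈ s, f x) = ∑ x ∈ s, (∏ y ∈ s.erase x, f y) • D (f x) := by
  induction s using Finset.induction_on with
  | empty => simp
  | insert a s ha ih =>
    rw [Finset.prod_insert ha, D.leibniz, ih, Finset.sum_insert ha, Finset.erase_insert ha,
      Finset.smul_sum, add_comm]
    congr 1
    refine Finset.sum_congr rfl fun x hx => ?_
    have hxa : x ≠ a := fun h => ha (h ▸ hx)
    rw [Finset.erase_insert_of_ne hxa.symm,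
      Finset.prod_insert fun h => ha (Finset.mem_of_mem_erase h), mul_smul]

end Derivation

section Determinant

variable {R A : Type*} {m : Type*} [Fintype m] [DecidableEq m]

theorem Derivation.map_det [CommSemiring R] [CommRing A] [Algebra R A] (D : Derivation R A A)
    (M : Matrix m m A) : D M.det = ∑ b, (M.updateCol b fun a => D (M a b)).det := by
  have hterm : ∀ (σ : Equiv.Perm m) (b : m),
      (∏ y ∈ Finset.univ.erase b, M (σ y) y) • D (M (σ b) b)
        = ∏ x, (M.updateCol b fun a => D (M a b)) (σ x) x := by
    intro σ b
    have hupd : ∀ x, (M.updateCol b fun a => D (M a b)) (σ x) x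
        = Function.update (fun x => M (σ x) x) b (D (M (σ b) b)) x := by
      intro x
      rcases eq_or_ne x b with rfl | h <;> simp [*]
    rw [Finset.prod_congr rfl fun x _ => hupd x, Finset.prod_update_of_mem (Finset.mem_univ b),
      Finset.sdiff_singleton_eq_erase, smul_eq_mul, mul_comm]
  simp only [det_apply, map_sum, Units.smul_def, map_zsmul, D.leibniz_prod, hterm,
    Finset.smul_sum]
  exact Finset.sum_comm

variable [CommRing R]

theorem det_updateCol_eq_sum_adjugate_mul (M : Matrix m m R) (b : m) (c : m → R) :
    (M.updateCol b c).det = ∑ a, adjugate M b a * c a := by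
  rw [← cramer_apply, cramer_eq_adjugate_mulVec]
  rfl

theorem det_updateRow_eq_sum_adjugate_mul (M : Matrix m m R) (a : m) (r : m → R) :
    (M.updateRow a r).det = ∑ b, adjugate M b a * r b := by
  rw [← cramer_transpose_apply, cramer_eq_adjugate_mulVec, ← adjugate_transpose]
  rfl

theorem sum_det_updateCol_eq_sum_det_updateRow (M C : Matrix m m R) :
    ∑ b, (M.updateCol b fun a => C a b).det = ∑ a, (M.updateRow a (C a)).det := by
  simp only [det_updateCol_eq_sum_adjugate_mul, det_updateRow_eq_sum_adjugate_mul]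
  exact Finset.sum_comm

end Determinant

section Plucker

variable {A ι : Type*}

def pluckerMatrix (μ : ℤ → A) (i j : ι → ℤ) : Matrix ι ι A := of fun a b => μ (i a - j b)

variable [DecidableEq ι]

theorem pluckerMatrix_update_left (μ : ℤ → A) (i j : ι → ℤ) (l : ι) (x : ℤ) :
    pluckerMatrix μ (Function.update i l x) j
      = (pluckerMatrix μ i j).updateRow l fun b => μ (x - j b) := by
  ext a b
  rcases eq_or_ne a l with rfl | h <;> simp [pluckerMatrix, *]

theorem pluckerMatrix_update_right (μ : ℤ → A) (i j : ι → ℤ) (l : ι) (y : ℤ) :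
    pluckerMatrix μ i (Function.update j l y)
      = (pluckerMatrix μ i j).updateCol l fun a => μ (i a - y) := by
  ext a b
  rcases eq_or_ne b l with rfl | h <;> simp [pluckerMatrix, *]

theorem Derivation.map_det_pluckerMatrix {R : Type*} [CommSemiring R] [CommRing A] [Algebra R A]
    [Fintype ι] (D : Derivation R A A) (μ : ℤ → A) (k : ℤ)
    (hD : ∀ m, D (μ m) = (m + k) • μ (m + k)) (i j : ι → ℤ) :
    D (pluckerMatrix μ i j).det
      = ∑ l, (i l + k) • (pluckerMatrix μ (Function.update i l (i l + k)) j).det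
        - ∑ l, j l • (pluckerMatrix μ i (Function.update j l (j l - k))).det := by
  set P := pluckerMatrix μ i j
  have hentry : ∀ a b, D (P a b)
      = ((i a + k : ℤ) : A) * μ (i a + k - j b) + ((-j b : ℤ) : A) * μ (i a - (j b - k)) := by
    intro a b
    rw [show P a b = μ (i a - j b) from rfl, hD, show i a + k - j b = i a - j b + k by ring,
      show i a - (j b - k) = i a - j b + k by ring, ← add_mul, zsmul_eq_mul]
    push_cast
    ring
  have hcol : ∀ b, (P.updateCol b fun a => D (P a b)).det
      = (P.updateCol b fun a => ((i a + k : ℤ) : A) * μ (i a + k - j b)).det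
        + (-j b) • (pluckerMatrix μ i (Function.update j b (j b - k))).det := by
    intro b
    simp only [hentry]
    rw [show (fun a => ((i a + k : ℤ) : A) * μ (i a + k - j b)
          + ((-j b : ℤ) : A) * μ (i a - (j b - k)))
        = (fun a => ((i a + k : ℤ) : A) * μ (i a + k - j b))
          + ((-j b : ℤ) : A) • fun a => μ (i a - (j b - k)) from rfl,
      det_updateCol_add, det_updateCol_smul, pluckerMatrix_update_right, ← zsmul_eq_mul]
  have hrow : ∀ a, (P.updateRow a fun b => ((i a + k : ℤ) : A) * μ (i a + k - j b)).det
      = (i a + k) • (pluckerMatrix μ (Function.update i a (i a + k)) j).det := by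
    intro a
    rw [show (fun b => ((i a + k : ℤ) : A) * μ (i a + k - j b))
        = ((i a + k : ℤ) : A) • fun b => μ (i a + k - j b) from rfl,
      det_updateRow_smul, pluckerMatrix_update_left, ← zsmul_eq_mul]
  rw [D.map_det, Finset.sum_congr rfl fun b _ => hcol b, Finset.sum_add_distrib,
    sum_det_updateCol_eq_sum_det_updateRow P
      (fun a b => ((i a + k : ℤ) : A) * μ (i a + k - j b)),
    Finset.sum_congr rfl fun a _ => hrow a]
  simp only [neg_smul, Finset.sum_neg_distrib, sub_eq_add_neg]

end Plucker

theorem master_symmetry_on_plucker_general {n : ℕ} (k : ℤ)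
    (V : Derivation ℂ (MvPolynomial ℤ ℂ) (MvPolynomial ℤ ℂ))
    (hV : ∀ m : ℤ, V (X m) = (m + k) • X (m + k))
    (i j : Fin n → ℤ) :
    V (Matrix.of fun a b : Fin n => X (i a - j b)).det
      = ∑ l : Fin n, (i l + k) •
          (Matrix.of fun a b : Fin n => X (Function.update i l (i l + k) a - j b)).det
        - ∑ l : Fin n, j l •
          (Matrix.of fun a b : Fin n => X (i a - Function.update j l (j l - k) b)).det :=
  V.map_det_pluckerMatrix X k hV i j

/-- Action of the master symmetry `V_k` (the derivation with
`V_k μ_j = (j+k) μ_{j+k}`, the indeterminate `X j` of `MvPolynomial ℤ ℂ` playing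
the role of `μ_j`) on the Plücker coordinates
`p(i;j) = det (μ_{i_a − j_b})_{0≤a,b<n}`:
`V_k p(i;j) = Σ_l (i_l + k) p(…, i_l + k, …; j) − Σ_l j_l p(i; …, j_l − k, …)`. -/
theorem master_symmetry_on_plucker {n : ℕ} (hn : 1 ≤ n) (k : ℤ)
    (V : Derivation ℂ (MvPolynomial ℤ ℂ) (MvPolynomial ℤ ℂ))
    (hV : ∀ m : ℤ, V (X m) = (m + k) • X (m + k))
    (i j : Fin n → ℤ) (hi : StrictMono i) (hj : StrictMono j)
    (hi0 : ∀ l, 0 ≤ i l) (hj0 : ∀ l, 0 ≤ j l) :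
    V (Matrix.of fun a b : Fin n => X (i a - j b)).det
      = ∑ l : Fin n, (i l + k) •
          (Matrix.of fun a b : Fin n => X (Function.update i l (i l + k) a - j b)).det
        - ∑ l : Fin n, j l •
          (Matrix.of fun a b : Fin n => X (i a - Function.update j l (j l - k) b)).det :=
  master_symmetry_on_plucker_general k V hV i j
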